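/- arXiv:1606.00051 — 2 statements merged into one kernel-verified Lean document; each statement's English description precedes it below -/
import Mathlib

section
/- Let N be a positive integer and let w : ZMod N → ℂ be a nonzero function with ‖w‖₂ = 1 satisfying |supp w| · |supp 𝓕 w| = N. Define the autocorrelation g : ZMod N → ℂ by g(x) = ∑_y w(y) · conj(w(y − x)). Then for every x: |g(x)|² = |supp w| · ∑_y |w(y)|² · |w(y − x)|², and |g(x)| ∈ {0, 1}. (This is Theorem 3.10 of the paper — for an extremal bi-partial isometry w, (w∗R(w)*)(w*∗R(w)) = ‖w‖₂² (ww*)∗(R(w)*R(w)) and w∗R(w)* is ‖w‖₂² times a partial isometry — specialized to L^∞(ℤ/Nℤ).) -/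
/-!
Write `𝓕` for the unnormalised transform, `A` for the support of `w` and `e` for the standard
character of `ZMod N`. Parseval gives `∑ₖ ‖𝓕 w k‖² = N ‖w‖²`, while Cauchy–Schwarz on `A` gives
`‖𝓕 w k‖² ≤ |A| ‖w‖²`; as `𝓕 w` has exactly `N / |A|` nonzero values, equality holds on its whole
support. The equality case of Cauchy–Schwarz makes `w t * e (-t k)` constant on `A` for each such
`k`, so `‖w‖` is constant on `A` and `e (k (i - j)) = w i / w j` for `i, j ∈ A`. By the
Wiener–Khinchin identity `N g(x) = ∑ₖ ‖𝓕 w k‖² e (k x)`, hence `g (i - j) = w i / w j` has modulus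
one, while `g x = 0` for `x ∉ A - A`. Finally `|A| ∑ y, ‖w y‖² ‖w (y - x)‖² = ∑ y, ‖w y‖ ‖w (y - x)‖`,
which lies between `‖g x‖` and `1`.
-/

open Complex Finset

noncomputable def dft (N : ℕ) [NeZero N] (f : ZMod N → ℂ) : ZMod N → ℂ :=
  fun k => (((N : ℝ) ^ (-(1/2 : ℝ)) : ℝ) : ℂ) *
    ∑ x : ZMod N, f x *
      Complex.exp (-2 * Real.pi * Complex.I * (k.val : ℂ) * (x.val : ℂ) / (N : ℂ))

noncomputable def l2norm (N : ℕ) [NeZero N] (f : ZMod N → ℂ) : ℝ :=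
  Real.sqrt (∑ x : ZMod N, ‖f x‖ ^ 2)

open scoped ZMod ComplexConjugate

section CauchySchwarz

variable {ι E : Type*} [NormedAddCommGroup E] [InnerProductSpace ℝ E] (s : Finset ι) (u : ι → E)

theorem Finset.sum_sum_sq_norm_sub :
    ∑ i ∈ s, ∑ j ∈ s, ‖u i - u j‖ ^ 2 = 2 * (#s * ∑ i ∈ s, ‖u i‖ ^ 2 - ‖∑ i ∈ s, u i‖ ^ 2) := by
  simp_rw [norm_sub_sq_real, sum_add_distrib, sum_sub_distrib, ← mul_sum, ← inner_sum, ← sum_inner,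
    real_inner_self_eq_norm_sq, sum_const, nsmul_eq_mul, ← mul_sum]
  ring

theorem Finset.sq_norm_sum_le_card_mul : ‖∑ i ∈ s, u i‖ ^ 2 ≤ #s * ∑ i ∈ s, ‖u i‖ ^ 2 := by
  have h := s.sum_sum_sq_norm_sub u
  have : 0 ≤ ∑ i ∈ s, ∑ j ∈ s, ‖u i - u j‖ ^ 2 := by positivity
  linarith

theorem Finset.eq_of_sq_norm_sum_eq_card_mul (h : ‖∑ i ∈ s, u i‖ ^ 2 = #s * ∑ i ∈ s, ‖u i‖ ^ 2)
    {i j : ι} (hi : i ∈ s) (hj : j ∈ s) : u i = u j := by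
  have hzero : ∑ i ∈ s, ∑ j ∈ s, ‖u i - u j‖ ^ 2 = 0 := by
    rw [s.sum_sum_sq_norm_sub u, h, sub_self, mul_zero]
  have hij := (sum_eq_zero_iff_of_nonneg fun _ _ => by positivity).1
    ((sum_eq_zero_iff_of_nonneg fun _ _ => by positivity).1 hzero i hi) j hj
  simpa [sub_eq_zero] using hij

end CauchySchwarz

theorem sum_norm_mul_norm_sub_le {G E : Type*} [AddGroup G] [Fintype G] [SeminormedAddGroup E]
    (f : G → E) (x : G) : ∑ y, ‖f y‖ * ‖f (y - x)‖ ≤ ∑ y, ‖f y‖ ^ 2 := calc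
  ∑ y, ‖f y‖ * ‖f (y - x)‖ ≤ ∑ y, (‖f y‖ ^ 2 + ‖f (y - x)‖ ^ 2) / 2 :=
    sum_le_sum fun y _ => by nlinarith [sq_nonneg (‖f y‖ - ‖f (y - x)‖)]
  _ = ∑ y, ‖f y‖ ^ 2 := by
    rw [← sum_div, sum_add_distrib, Fintype.sum_equiv (Equiv.subRight x)
      (fun y => ‖f (y - x)‖ ^ 2) (fun y => ‖f y‖ ^ 2) fun _ => rfl]
    ring

namespace ZMod

variable {N : ℕ} [NeZero N]

lemma starRingEnd_stdAddChar (j : ZMod N) : conj (stdAddChar j) = stdAddChar (-j) := by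
  simp [stdAddChar_apply, AddChar.map_neg_eq_inv, ← Circle.coe_inv_eq_conj]

lemma sum_stdAddChar_mul (a : ZMod N) :
    ∑ k : ZMod N, stdAddChar (k * a) = if a = 0 then (N : ℂ) else 0 := by
  simpa [ZMod.card] using AddChar.sum_mulShift a (isPrimitive_stdAddChar N)

theorem sum_sq_norm_dft_mul_stdAddChar (f : ZMod N → ℂ) (x : ZMod N) :
    ∑ k, (‖𝓕 f k‖ ^ 2 : ℂ) * stdAddChar (k * x) = N * ∑ y, f y * conj (f (y - x)) := by
  calc ∑ k, (‖𝓕 f k‖ ^ 2 : ℂ) * stdAddChar (k * x)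
      = ∑ k, ∑ i, ∑ j, f i * conj (f j) * stdAddChar (k * (j + x - i)) := by
        refine sum_congr rfl fun k _ => ?_
        simp_rw [← mul_conj', dft_apply, map_sum, sum_mul_sum, sum_mul, smul_eq_mul, map_mul,
          starRingEnd_stdAddChar]
        refine sum_congr rfl fun i _ => sum_congr rfl fun j _ => ?_
        rw [show k * (j + x - i) = -(i * k) + -(-(j * k)) + k * x by ring]
        simp only [AddChar.map_add_eq_mul]
        ring
    _ = ∑ i, ∑ j, f i * conj (f j) * ∑ k, stdAddChar (k * (j + x - i)) := by
        rw [sum_comm]; simp_rw [mul_sum]; exact sum_congr rfl fun _ _ => sum_comm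
    _ = N * ∑ y, f y * conj (f (y - x)) := by
        simp_rw [sum_stdAddChar_mul, sub_eq_zero, ← eq_sub_iff_add_eq, mul_ite, mul_zero,
          sum_ite_eq', mem_univ, if_true, mul_sum]
        exact sum_congr rfl fun _ _ => mul_comm _ _

theorem sum_sq_norm_dft (f : ZMod N → ℂ) : ∑ k, ‖𝓕 f k‖ ^ 2 = N * ∑ j, ‖f j‖ ^ 2 := by
  have h := sum_sq_norm_dft_mul_stdAddChar f 0
  simp_rw [mul_zero, AddChar.map_zero_eq_one, mul_one, sub_zero, mul_conj'] at h
  exact_mod_cast h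

lemma dft_eq_sum_support (f : ZMod N → ℂ) (k : ZMod N) :
    𝓕 f k = ∑ j with f j ≠ 0, stdAddChar (-(j * k)) * f j :=
  (sum_filter_of_ne (p := fun j => f j ≠ 0) fun j _ h hj => h (by rw [hj, smul_zero])).symm

lemma sum_support_sq_norm (f : ZMod N → ℂ) : ∑ j with f j ≠ 0, ‖f j‖ ^ 2 = ∑ j, ‖f j‖ ^ 2 :=
  sum_filter_of_ne (p := fun j => f j ≠ 0) fun j _ h hj =>
    h (by rw [hj, norm_zero, zero_pow two_ne_zero])

theorem sq_norm_dft_le (f : ZMod N → ℂ) (k : ZMod N) :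
    ‖𝓕 f k‖ ^ 2 ≤ #{j | f j ≠ 0} * ∑ j, ‖f j‖ ^ 2 := by
  simpa [dft_eq_sum_support, sum_support_sq_norm] using
    sq_norm_sum_le_card_mul {j | f j ≠ 0} fun j => stdAddChar (-(j * k)) * f j

section Extremal

variable {f : ZMod N → ℂ} (h : #{j | f j ≠ 0} * #{k | 𝓕 f k ≠ 0} = N)
include h

theorem sq_norm_dft_eq_of_card_mul_card_eq {k : ZMod N} (hk : 𝓕 f k ≠ 0) :
    ‖𝓕 f k‖ ^ 2 = #{j | f j ≠ 0} * ∑ j, ‖f j‖ ^ 2 := by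
  have hsum : ∑ k with 𝓕 f k ≠ 0, ‖𝓕 f k‖ ^ 2
      = ∑ k with 𝓕 f k ≠ 0, (#{j | f j ≠ 0} * ∑ j, ‖f j‖ ^ 2 : ℝ) := by
    rw [sum_filter_of_ne (p := fun k => 𝓕 f k ≠ 0) fun k _ hk hk0 =>
        hk (by rw [hk0, norm_zero, zero_pow two_ne_zero]),
      sum_sq_norm_dft, sum_const, nsmul_eq_mul]
    rw [show (N : ℝ) = #{j | f j ≠ 0} * #{k | 𝓕 f k ≠ 0} by exact_mod_cast h.symm]
    ring
  exact (sum_eq_sum_iff_of_le fun k _ => sq_norm_dft_le f k).1 hsum k (by simpa using hk)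

theorem stdAddChar_mul_eq_of_card_mul_card_eq {k : ZMod N} (hk : 𝓕 f k ≠ 0) {i j : ZMod N}
    (hi : f i ≠ 0) (hj : f j ≠ 0) :
    stdAddChar (-(i * k)) * f i = stdAddChar (-(j * k)) * f j := by
  refine eq_of_sq_norm_sum_eq_card_mul {j | f j ≠ 0} (fun j => stdAddChar (-(j * k)) * f j) ?_
    (by simpa using hi) (by simpa using hj)
  rw [← dft_eq_sum_support, sq_norm_dft_eq_of_card_mul_card_eq h hk]
  simp [sum_support_sq_norm]

theorem norm_eq_of_card_mul_card_eq {i j : ZMod N} (hi : f i ≠ 0) (hj : f j ≠ 0) :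
    ‖f i‖ = ‖f j‖ := by
  obtain ⟨k, hk⟩ : ∃ k, 𝓕 f k ≠ 0 := by
    have : #{k | 𝓕 f k ≠ 0} ≠ 0 := right_ne_zero_of_mul (h ▸ NeZero.ne N)
    simpa [card_eq_zero, filter_eq_empty_iff] using this
  simpa using congrArg norm (stdAddChar_mul_eq_of_card_mul_card_eq h hk hi hj)

theorem card_mul_sq_norm_eq_of_card_mul_card_eq {i : ZMod N} (hi : f i ≠ 0) :
    #{j | f j ≠ 0} * ‖f i‖ ^ 2 = ∑ j, ‖f j‖ ^ 2 := by
  rw [← sum_support_sq_norm, ← nsmul_eq_mul, ← sum_const]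
  exact sum_congr rfl fun j hj => by
    rw [norm_eq_of_card_mul_card_eq h hi (mem_filter.1 hj).2]

theorem card_mul_sq_norm_mul_sq_norm_of_card_mul_card_eq (a b : ZMod N) :
    #{j | f j ≠ 0} * (‖f a‖ ^ 2 * ‖f b‖ ^ 2) = (∑ j, ‖f j‖ ^ 2) * (‖f a‖ * ‖f b‖) := by
  by_cases ha : f a = 0
  · simp [ha]
  by_cases hb : f b = 0
  · simp [hb]
  rw [norm_eq_of_card_mul_card_eq h ha hb, ← card_mul_sq_norm_eq_of_card_mul_card_eq h hb]
  ring

theorem autocorrelation_sub_of_card_mul_card_eq {i j : ZMod N} (hi : f i ≠ 0) (hj : f j ≠ 0) :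
    ∑ y, f y * conj (f (y - (i - j))) = (∑ y, ‖f y‖ ^ 2 : ℝ) * (f i / f j) := by
  have hphase : ∀ k, 𝓕 f k ≠ 0 → stdAddChar (k * (i - j)) = f i / f j := fun k hk => by
    rw [eq_div_iff hj, show k * (i - j) = i * k + -(j * k) by ring, AddChar.map_add_eq_mul,
      mul_assoc, ← stdAddChar_mul_eq_of_card_mul_card_eq h hk hi hj, ← mul_assoc,
      ← AddChar.map_add_eq_mul, add_neg_cancel, AddChar.map_zero_eq_one, one_mul]
  have hN : (N : ℂ) = #{j | f j ≠ 0} * #{k | 𝓕 f k ≠ 0} := by exact_mod_cast h.symm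
  refine mul_left_cancel₀ (NeZero.ne (N : ℂ)) ?_
  rw [← sum_sq_norm_dft_mul_stdAddChar, ← sum_filter_of_ne (p := fun k => 𝓕 f k ≠ 0)
    fun k _ hk hk0 => hk (by simp [hk0])]
  calc ∑ k with 𝓕 f k ≠ 0, (‖𝓕 f k‖ ^ 2 : ℂ) * stdAddChar (k * (i - j))
      = ∑ k with 𝓕 f k ≠ 0, (#{j | f j ≠ 0} * ∑ y, ‖f y‖ ^ 2 : ℝ) * (f i / f j) :=
        sum_congr rfl fun k hk => by
          rw [hphase k (mem_filter.1 hk).2,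
            ← sq_norm_dft_eq_of_card_mul_card_eq h (mem_filter.1 hk).2]
          push_cast
          rfl
    _ = N * ((∑ y, ‖f y‖ ^ 2 : ℝ) * (f i / f j)) := by
        rw [sum_const, nsmul_eq_mul, hN]
        push_cast
        ring

theorem sq_norm_autocorrelation_of_card_mul_card_eq (x : ZMod N) :
    ‖∑ y, f y * conj (f (y - x))‖ ^ 2 = #{j | f j ≠ 0} * ∑ y, ‖f y‖ ^ 2 * ‖f (y - x)‖ ^ 2 ∧
      (‖∑ y, f y * conj (f (y - x))‖ = 0 ∨ ‖∑ y, f y * conj (f (y - x))‖ = ∑ y, ‖f y‖ ^ 2) := by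
  have hgS : ‖∑ y, f y * conj (f (y - x))‖ ≤ ∑ y, ‖f y‖ * ‖f (y - x)‖ :=
    (norm_sum_le _ _).trans_eq (by simp only [norm_mul, RCLike.norm_conj])
  have hS := sum_norm_mul_norm_sub_le f x
  simp_rw [mul_sum, card_mul_sq_norm_mul_sq_norm_of_card_mul_card_eq h, ← mul_sum]
  by_cases hx : ∃ y, f y ≠ 0 ∧ f (y - x) ≠ 0
  · obtain ⟨y, hy, hyx⟩ := hx
    have hg : ‖∑ y, f y * conj (f (y - x))‖ = ∑ y, ‖f y‖ ^ 2 := by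
      have hgy := autocorrelation_sub_of_card_mul_card_eq h hy hyx
      rw [sub_sub_cancel] at hgy
      rw [hgy, norm_mul, norm_div, norm_eq_of_card_mul_card_eq h hy hyx,
        div_self (norm_ne_zero_iff.2 hyx), mul_one, norm_real, Real.norm_of_nonneg (by positivity)]
    exact ⟨by rw [hg, le_antisymm hS (hg ▸ hgS), sq], Or.inr hg⟩
  · push Not at hx
    have hS0 : ∑ y, ‖f y‖ * ‖f (y - x)‖ = 0 :=
      sum_eq_zero fun y _ => by by_cases hy : f y = 0 <;> simp [hy, hx]
    have hg : ‖∑ y, f y * conj (f (y - x))‖ = 0 := le_antisymm (hS0 ▸ hgS) (norm_nonneg _)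
    exact ⟨by rw [hg, hS0]; simp, Or.inl hg⟩

end Extremal

end ZMod

lemma Function.ncard_support_eq_card_filter {α M : Type*} [Fintype α] [Zero M] [DecidableEq M]
    (f : α → M) : (Function.support f).ncard = #{x | f x ≠ 0} := by
  rw [← Set.ncard_coe_finset]
  simp [Function.support]

theorem dft_eq_smul (N : ℕ) [NeZero N] (f : ZMod N → ℂ) :
    dft N f = (((N : ℝ) ^ (-(1 / 2 : ℝ)) : ℝ) : ℂ) • 𝓕 f := by
  ext k
  simp only [dft, Pi.smul_apply, ZMod.dft_apply, smul_eq_mul]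
  congr 1
  refine sum_congr rfl fun x _ => ?_
  have hcast : (-(x * k) : ZMod N) = ((-(x.val * k.val : ℤ) : ℤ) : ZMod N) := by
    push_cast [ZMod.natCast_val, ZMod.cast_id]
    rfl
  rw [hcast, ZMod.stdAddChar_coe, mul_comm]
  congr 2
  push_cast
  ring

theorem support_dft (N : ℕ) [NeZero N] (f : ZMod N → ℂ) :
    Function.support (dft N f) = Function.support (𝓕 f) := by
  rw [dft_eq_smul]
  refine Function.support_const_smul_of_ne_zero _ _ ?_
  exact_mod_cast (Real.rpow_pos_of_pos (by exact_mod_cast NeZero.pos N) _).ne'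

theorem autocorrelation_of_minimizer_general (N : ℕ) [NeZero N] (w : ZMod N → ℂ)
    (hw2 : l2norm N w = 1)
    (hmin : (Function.support w).ncard * (Function.support (dft N w)).ncard = N)
    (x : ZMod N) :
    ‖∑ y : ZMod N, w y * (starRingEnd ℂ) (w (y - x))‖ ^ 2 =
        (Function.support w).ncard *
          ∑ y : ZMod N, ‖w y‖ ^ 2 * ‖w (y - x)‖ ^ 2 ∧
      (‖∑ y : ZMod N, w y * (starRingEnd ℂ) (w (y - x))‖ = 0 ∨
        ‖∑ y : ZMod N, w y * (starRingEnd ℂ) (w (y - x))‖ = 1) := by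
  have hw : ∑ y, ‖w y‖ ^ 2 = 1 := by rwa [l2norm, Real.sqrt_eq_one] at hw2
  rw [support_dft, Function.ncard_support_eq_card_filter,
    Function.ncard_support_eq_card_filter] at hmin
  simpa only [Function.ncard_support_eq_card_filter, hw] using
    ZMod.sq_norm_autocorrelation_of_card_mul_card_eq hmin x

/-- For an extremal bi-partial isometry w with unit ℓ²-norm, the
autocorrelation g(x) = ∑ y, w(y) conj(w(y-x)) satisfies
|g(x)|² = |supp w| ∑ y |w y|² |w (y-x)|², and g is a partial isometry. -/
theorem autocorrelation_of_minimizer (N : ℕ) [NeZero N] (w : ZMod N → ℂ)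
    (hw : w ≠ 0) (hw2 : l2norm N w = 1)
    (hmin : (Function.support w).ncard * (Function.support (dft N w)).ncard = N)
    (x : ZMod N) :
    ‖∑ y : ZMod N, w y * (starRingEnd ℂ) (w (y - x))‖ ^ 2 =
        (Function.support w).ncard *
          ∑ y : ZMod N, ‖w y‖ ^ 2 * ‖w (y - x)‖ ^ 2 ∧
      (‖∑ y : ZMod N, w y * (starRingEnd ℂ) (w (y - x))‖ = 0 ∨
        ‖∑ y : ZMod N, w y * (starRingEnd ℂ) (w (y - x))‖ = 1) :=
  autocorrelation_of_minimizer_general N w hw2 hmin x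
end

section
/- Let N be a positive integer and let f : ZMod N → ℂ be nonzero such that f(x) is a nonnegative real for every x, (𝓕 f)(k) is a nonnegative real for every k, and |supp f| · |supp 𝓕 f| = N. Then there exist an additive subgroup H of ZMod N and a positive real c such that f = c · 1_H. (This is Corollary 3.14 of the paper — if x and 𝓕(x) are positive and 𝒮(x)𝒮(𝓕(x)) = 1, then x is a biprojection — specialized to L^∞(ℤ/Nℤ).) -/
/-!
Write `r = N^(-1/2)` and `g = dft N f`. Since `f ≥ 0` and `g ≥ 0`, the triangle inequality gives
`‖g k‖ ≤ r ∑ ‖f‖ = g 0` and, through Fourier inversion `f x = dft N g (-x)`,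
`‖f x‖ ≤ r ∑ ‖g‖ = f 0`. Summing over the supports `A` and `B`,
`∑ ‖f‖ ≤ |A| r ∑ ‖g‖ ≤ |A| |B| r² ∑ ‖f‖ = ∑ ‖f‖`, so `f` is constant on `A`.
Finally `f w = f 0` says `∑ g k e(wk/N) = ∑ g k`, which for `g ≥ 0` means `wk = 0` for all
`k ∈ B`: `A` is the annihilator of `B`, an additive subgroup.
-/

open Complex Finset

open scoped ComplexOrder ZMod
open Function

lemma rpow_neg_one_half_sq {x : ℝ} (hx : 0 ≤ x) : (x ^ (-(1/2 : ℝ))) ^ 2 = x⁻¹ := by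
  rw [← Real.rpow_natCast, ← Real.rpow_mul hx]
  norm_num [Real.rpow_neg_one]

lemma Complex.sum_ofReal_mul_eq_sum_iff {ι : Type*} [Fintype ι] {a : ι → ℝ} (ha : ∀ i, 0 ≤ a i)
    {z : ι → ℂ} (hz : ∀ i, ‖z i‖ ≤ 1) :
    ∑ i, (a i : ℂ) * z i = ∑ i, (a i : ℂ) ↔ ∀ i, a i ≠ 0 → z i = 1 := by
  constructor
  · intro h i hi
    have hre : ∑ i, a i * (z i).re = ∑ i, a i := by
      simpa [re_sum] using congrArg Complex.re h
    have hle : ∀ i ∈ univ, a i * (z i).re ≤ a i := fun i _ =>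
      mul_le_of_le_one_right (ha i) ((re_le_norm _).trans (hz i))
    have hi1 : (z i).re = 1 := by
      have := (sum_eq_sum_iff_of_le hle).1 hre i (mem_univ i)
      exact (mul_eq_left₀ hi).1 this
    have hnorm : (z i).re = ‖z i‖ := le_antisymm (re_le_norm _) (hi1 ▸ hz i)
    rw [← norm_of_nonneg' (re_eq_norm.1 hnorm), ← hnorm, hi1, ofReal_one]
  · intro h
    refine sum_congr rfl fun i _ => ?_
    by_cases hi : a i = 0
    · simp [hi]
    · rw [h i hi, mul_one]

lemma eq_mul_sum_of_mem_support {α β : Type*} [Fintype α] [Fintype β] {u : α → ℝ} {v : β → ℝ}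
    {r : ℝ} (hu0 : ∀ x, 0 ≤ u x) (hr : 0 ≤ r) (hu : ∀ x, u x ≤ r * ∑ k, v k)
    (hv : ∀ k, v k ≤ r * ∑ x, u x)
    (hcard : ((support u).ncard * (support v).ncard : ℝ) * r ^ 2 ≤ 1)
    {x : α} (hx : x ∈ support u) : u x = r * ∑ k, v k := by
  classical
  set A := (support u).toFinset
  set B := (support v).toFinset
  have hA : (support u).ncard = #A := Set.ncard_eq_toFinset_card' _
  have hB : (support v).ncard = #B := Set.ncard_eq_toFinset_card' _
  have hsumA : ∑ x, u x = ∑ x ∈ A, u x := (sum_subset (subset_univ _) (by simp [A])).symm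
  have hsumB : ∑ k, v k = ∑ k ∈ B, v k := (sum_subset (subset_univ _) (by simp [B])).symm
  have hleA : ∑ x ∈ A, u x ≤ #A * (r * ∑ k, v k) := by
    simpa using sum_le_sum fun x (_ : x ∈ A) => hu x
  have hleB : ∑ k, v k ≤ #B * (r * ∑ x, u x) := by
    simpa [hsumB] using sum_le_sum fun k (_ : k ∈ B) => hv k
  have hS : 0 ≤ ∑ x, u x := sum_nonneg fun x _ => hu0 x
  have hchain : #A * (r * ∑ k, v k) ≤ ∑ x ∈ A, u x := calc
    #A * (r * ∑ k, v k) ≤ #A * (r * (#B * (r * ∑ x, u x))) := by gcongr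
    _ = (#A * #B : ℝ) * r ^ 2 * ∑ x, u x := by ring
    _ ≤ ∑ x, u x := mul_le_of_le_one_left hS (by rwa [hA, hB] at hcard)
    _ = ∑ x ∈ A, u x := hsumA
  have heq : ∑ x ∈ A, u x = ∑ _x ∈ A, r * ∑ k, v k := by
    rw [sum_const, nsmul_eq_mul]
    exact le_antisymm hleA hchain
  exact (sum_eq_sum_iff_of_le fun x _ => hu x).1 heq x (by simpa [A] using hx)

section

variable {N : ℕ} [NeZero N]

lemma dft_apply_eq_mul_zmod_dft (f : ZMod N → ℂ) (k : ZMod N) :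
    dft N f k = (((N : ℝ) ^ (-(1/2 : ℝ)) : ℝ) : ℂ) * 𝓕 f k := by
  rw [dft, ZMod.dft_apply]
  congr 1
  refine sum_congr rfl fun x _ => ?_
  have : (-(x * k) : ZMod N) = ((-(k.val * x.val : ℤ) : ℤ) : ZMod N) := by
    push_cast [ZMod.natCast_val, ZMod.cast_id]
    ring
  rw [smul_eq_mul, mul_comm, this, ZMod.stdAddChar_coe]
  congr 2
  push_cast
  ring

lemma dft_eq_smul_zmod_dft (f : ZMod N → ℂ) :
    dft N f = (((N : ℝ) ^ (-(1/2 : ℝ)) : ℝ) : ℂ) • 𝓕 f :=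
  funext (dft_apply_eq_mul_zmod_dft f)

lemma dft_dft (f : ZMod N → ℂ) (x : ZMod N) : dft N (dft N f) x = f (-x) := by
  have hN : (((N : ℝ) ^ (-(1/2 : ℝ)) : ℝ) : ℂ) ^ 2 * N = 1 := by
    rw [← ofReal_pow, rpow_neg_one_half_sq (Nat.cast_nonneg N), ofReal_inv, ofReal_natCast,
      inv_mul_cancel₀ (NeZero.ne _)]
  rw [dft_eq_smul_zmod_dft, dft_eq_smul_zmod_dft, map_smul, ZMod.dft_dft]
  simp only [Pi.smul_apply, smul_eq_mul, ← mul_assoc, ← sq, hN, one_mul]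

lemma norm_dft_le (f : ZMod N → ℂ) (k : ZMod N) :
    ‖dft N f k‖ ≤ (N : ℝ) ^ (-(1/2 : ℝ)) * ∑ x, ‖f x‖ := by
  rw [dft_apply_eq_mul_zmod_dft, norm_mul, norm_real, Real.norm_of_nonneg (by positivity),
    ZMod.dft_apply]
  gcongr
  refine (norm_sum_le _ _).trans_eq (sum_congr rfl fun x _ => ?_)
  rw [norm_smul, AddChar.norm_apply, one_mul]

lemma dft_zero_of_nonneg {f : ZMod N → ℂ} (hf : ∀ x, 0 ≤ f x) :
    dft N f 0 = (((N : ℝ) ^ (-(1/2 : ℝ)) * ∑ x, ‖f x‖ : ℝ) : ℂ) := by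
  rw [dft_apply_eq_mul_zmod_dft, ZMod.dft_apply_zero]
  push_cast
  simp_rw [norm_of_nonneg' (hf _)]

lemma apply_eq_apply_zero_of_mem_support {f : ZMod N → ℂ} (hf : ∀ x, 0 ≤ f x)
    (hF : ∀ k, 0 ≤ dft N f k)
    (hmin : (support f).ncard * (support (dft N f)).ncard = N) {x : ZMod N}
    (hx : x ∈ support f) : f x = f 0 := by
  have hf_eq : ∀ x, f x = dft N (dft N f) (-x) := fun x => by rw [dft_dft, neg_neg]
  have hcard : ((support (‖f ·‖)).ncard * (support (‖dft N f ·‖)).ncard : ℝ) *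
      ((N : ℝ) ^ (-(1/2 : ℝ))) ^ 2 ≤ 1 := by
    have hsupp : ∀ φ : ZMod N → ℂ, support (‖φ ·‖) = support φ :=
      support_comp_eq norm (fun {_} => norm_eq_zero)
    rw [hsupp, hsupp, ← Nat.cast_mul, hmin, rpow_neg_one_half_sq (Nat.cast_nonneg N),
      mul_inv_cancel₀ (NeZero.ne (N : ℝ))]
  have hnorm : ‖f x‖ = (N : ℝ) ^ (-(1/2 : ℝ)) * ∑ k, ‖dft N f k‖ :=
    eq_mul_sum_of_mem_support (fun _ => norm_nonneg _) (by positivity)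
      (fun x => hf_eq x ▸ norm_dft_le _ _) (norm_dft_le f) hcard (by simpa using hx)
  rw [← norm_of_nonneg' (hf x), hnorm, hf_eq 0, neg_zero, dft_zero_of_nonneg hF]

lemma dft_eq_dft_zero_iff {g : ZMod N → ℂ} (hg : ∀ k, 0 ≤ g k) (w : ZMod N) :
    dft N g w = dft N g 0 ↔ ∀ k ∈ support g, w * k = 0 := by
  have hr : (((N : ℝ) ^ (-(1/2 : ℝ)) : ℝ) : ℂ) ≠ 0 := by
    exact_mod_cast (Real.rpow_pos_of_pos (Nat.cast_pos.2 (NeZero.pos N)) _).ne'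
  have hg' : g = fun k => ((‖g k‖ : ℝ) : ℂ) := funext fun k => (norm_of_nonneg' (hg k)).symm
  rw [dft_apply_eq_mul_zmod_dft, dft_apply_eq_mul_zmod_dft, mul_right_inj' hr, ZMod.dft_apply,
    ZMod.dft_apply_zero]
  simp_rw [smul_eq_mul, mul_comm (ZMod.stdAddChar _)]
  conv_lhs => rw [hg']
  rw [Complex.sum_ofReal_mul_eq_sum_iff (fun _ => norm_nonneg _)
    (fun _ => (AddChar.norm_apply _ _).le)]
  have hψ : ∀ j : ZMod N, ZMod.stdAddChar j = 1 ↔ j = 0 := fun j => by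
    rw [← AddChar.map_zero_eq_one (ZMod.stdAddChar (N := N)),
      (ZMod.injective_stdAddChar (N := N)).eq_iff]
  simp only [ne_eq, norm_eq_zero, hψ, neg_eq_zero, mem_support, mul_comm w]

lemma support_eq_annihilator {f : ZMod N → ℂ} (hf : f ≠ 0) (hf0 : ∀ x, 0 ≤ f x)
    (hF0 : ∀ k, 0 ≤ dft N f k)
    (hmin : (support f).ncard * (support (dft N f)).ncard = N) :
    support f = (Submodule.span (ZMod N) (support (dft N f))).annihilator := by
  obtain ⟨x, hx⟩ := support_nonempty_iff.2 hf
  have hf0_ne : f 0 ≠ 0 := apply_eq_apply_zero_of_mem_support hf0 hF0 hmin hx ▸ hx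
  ext w
  have hw := dft_eq_dft_zero_iff hF0 (-w)
  rw [dft_dft, dft_dft, neg_neg, neg_zero] at hw
  simp only [neg_mul, neg_eq_zero] at hw
  simp only [SetLike.mem_coe, Submodule.mem_annihilator_span, Subtype.forall, smul_eq_mul, ← hw]
  exact ⟨apply_eq_apply_zero_of_mem_support hf0 hF0 hmin, fun h => mem_support.2 (h ▸ hf0_ne)⟩

end

/-- If f and its Fourier transform are (pointwise) nonnegative and f saturates
the Donoho–Stark uncertainty principle, then f is a positive multiple of the
indicator function of a subgroup (a biprojection). -/
theorem positive_minimizer_is_biprojection (N : ℕ) [NeZero N] (f : ZMod N → ℂ)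
    (hf : f ≠ 0)
    (hpos : ∀ x : ZMod N, (f x).im = 0 ∧ 0 ≤ (f x).re)
    (hposF : ∀ k : ZMod N, (dft N f k).im = 0 ∧ 0 ≤ (dft N f k).re)
    (hmin : (Function.support f).ncard * (Function.support (dft N f)).ncard = N) :
    ∃ (H : AddSubgroup (ZMod N)) (c : ℝ), 0 < c ∧
      f = fun x => (c : ℂ) * Set.indicator (H : Set (ZMod N)) (fun _ => (1 : ℂ)) x := by
  have hf0 : ∀ x, 0 ≤ f x := fun x => nonneg_iff.2 ⟨(hpos x).2, (hpos x).1.symm⟩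
  have hF0 : ∀ k, 0 ≤ dft N f k := fun k => nonneg_iff.2 ⟨(hposF k).2, (hposF k).1.symm⟩
  have hsupp := support_eq_annihilator hf hf0 hF0 hmin
  obtain ⟨x, hx⟩ := support_nonempty_iff.2 hf
  have hflat : ∀ x ∈ support f, f x = f 0 :=
    fun _ => apply_eq_apply_zero_of_mem_support hf0 hF0 hmin
  refine ⟨(Submodule.span (ZMod N) (support (dft N f))).annihilator.toAddSubgroup, ‖f 0‖,
    norm_pos_iff.2 (hflat x hx ▸ hx), funext fun w => ?_⟩
  rw [norm_of_nonneg' (hf0 0), Submodule.coe_toAddSubgroup, ← hsupp]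
  by_cases hw : w ∈ support f
  · rw [Set.indicator_of_mem hw, mul_one, hflat w hw]
  · rw [Set.indicator_of_notMem hw, mul_zero, ← notMem_support]
    exact hw
end
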